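/- Let (d_i)_{i ∈ Ω} be a family of (⊙,∨)-derivations on the standard MV-algebra I = [0,1] (which is a complete lattice under the usual order). Then the pointwise supremum d : I → I, defined by d(x) = ⨆_{i ∈ Ω} d_i(x), is an (⊙,∨)-derivation on I. -/
import Mathlib

/-- Łukasiewicz strong conjunction `x ⊙ y = max 0 (x + y - 1)` on the unit interval. -/
noncomputable def od (x y : unitInterval) : unitInterval :=
  ⟨max 0 (x.1 + y.1 - 1),
    ⟨le_max_left _ _, max_le zero_le_one (by have := x.2.2; have := y.2.2; linarith)⟩⟩

/-- Łukasiewicz strong disjunction `x ⊕ y = min 1 (x + y)` on the unit interval. -/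
noncomputable def op (x y : unitInterval) : unitInterval :=
  ⟨min 1 (x.1 + y.1),
    ⟨le_min zero_le_one (by have := x.2.1; have := y.2.1; linarith), min_le_left _ _⟩⟩

/-- `d` is an `(⊙,∨)`-derivation on the standard MV-algebra `[0,1]`:
`d (x ⊙ y) = (d x ⊙ y) ∨ (x ⊙ d y)` for all `x, y`. -/
def IsOdotDer (d : unitInterval → unitInterval) : Prop :=
  ∀ x y : unitInterval, d (od x y) = max (od (d x) y) (od x (d y))

instance : Fact ((0 : ℝ) ≤ 1) := ⟨zero_le_one⟩

lemma uc_coe_max (a b : unitInterval) : ((max a b : unitInterval) : ℝ) = max (a : ℝ) (b : ℝ) := by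
  have hm : Monotone (fun t : unitInterval => (t : ℝ)) := fun _ _ h => h
  exact hm.map_max

lemma uc_coe_bot : ((⊥ : unitInterval) : ℝ) = 0 := rfl

lemma uc_coe_iSup {ι : Type*} [Nonempty ι] (f : ι → unitInterval) :
    ((⨆ i, f i : unitInterval) : ℝ) = ⨆ i, (f i : ℝ) := by
  have hbdd : BddAbove (Set.range fun i => (f i : ℝ)) :=
    ⟨1, by rintro _ ⟨i, rfl⟩; exact (f i).2.2⟩
  have h0 : (0:ℝ) ≤ ⨆ i, (f i : ℝ) :=
    le_trans (f (Classical.arbitrary ι)).2.1 (le_ciSup hbdd _)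
  have h1 : (⨆ i, (f i : ℝ)) ≤ 1 := ciSup_le fun i => (f i).2.2
  apply le_antisymm
  · have : (⨆ i, f i) ≤ (⟨⨆ i, (f i : ℝ), h0, h1⟩ : unitInterval) :=
      iSup_le fun i => Subtype.coe_le_coe.mp (le_ciSup hbdd i)
    exact this
  · exact ciSup_le fun i => Subtype.coe_le_coe.mpr (le_iSup f i)

lemma real_sup_max {ι : Type*} [Nonempty ι] (f g : ι → ℝ)
    (hf : BddAbove (Set.range f)) (hg : BddAbove (Set.range g)) :
    (⨆ i, max (f i) (g i)) = max (⨆ i, f i) (⨆ i, g i) := by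
  have hb : BddAbove (Set.range fun i => max (f i) (g i)) := by
    obtain ⟨cf, hcf⟩ := hf; obtain ⟨cg, hcg⟩ := hg
    refine ⟨max cf cg, ?_⟩
    rintro _ ⟨i, rfl⟩
    exact max_le_max (hcf ⟨i, rfl⟩) (hcg ⟨i, rfl⟩)
  apply le_antisymm
  · exact ciSup_le fun i => max_le_max (le_ciSup hf i) (le_ciSup hg i)
  · exact max_le (ciSup_mono hb fun i => le_max_left _ _)
      (ciSup_mono hb fun i => le_max_right _ _)

lemma real_max0_sup {ι : Type*} [Nonempty ι] (a : ι → ℝ)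
    (hb : BddAbove (Set.range a)) (c : ℝ) :
    max 0 ((⨆ i, a i) + c) = ⨆ i, max 0 (a i + c) := by
  have hm : Monotone (fun t : ℝ => max 0 (t + c)) :=
    fun u v h => max_le_max le_rfl (by linarith)
  have hc : Continuous fun t : ℝ => max 0 (t + c) :=
    continuous_const.max (continuous_id.add continuous_const)
  exact hm.map_ciSup_of_continuousAt hc.continuousAt hb

lemma real_L1 {ι : Type*} [Nonempty ι] (a : ι → ℝ)
    (hb : BddAbove (Set.range a)) (c : ℝ) :
    (⨆ i, max 0 (a i + c - 1)) = max 0 ((⨆ i, a i) + c - 1) := by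
  rw [show (⨆ i, max 0 (a i + c - 1)) = ⨆ i, max 0 (a i + (c - 1)) from
    iSup_congr fun i => by ring_nf, ← real_max0_sup a hb (c - 1)]
  ring_nf

lemma real_L2 {ι : Type*} [Nonempty ι] (a : ι → ℝ)
    (hb : BddAbove (Set.range a)) (c : ℝ) :
    (⨆ i, max 0 (c + a i - 1)) = max 0 (c + (⨆ i, a i) - 1) := by
  rw [show (⨆ i, max 0 (c + a i - 1)) = ⨆ i, max 0 (a i + (c - 1)) from
    iSup_congr fun i => by ring_nf, ← real_max0_sup a hb (c - 1)]
  ring_nf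

/-- the pointwise supremum of a family of (⊙,∨)-derivations on the
complete lattice [0,1] is an (⊙,∨)-derivation. -/
theorem stmt16 {Ω : Type*} (d : Ω → unitInterval → unitInterval)
    (hd : ∀ i : Ω, IsOdotDer (d i)) :
    IsOdotDer (fun x => ⨆ i : Ω, d i x) := by
  intro x y
  rcases isEmpty_or_nonempty Ω with h | h
  · simp only [iSup_of_empty]
    have hbot : ∀ z : unitInterval, od ⊥ z = ⊥ := fun z => by
      apply Subtype.ext
      show max 0 (((⊥:unitInterval):ℝ) + z.1 - 1) = ((⊥:unitInterval):ℝ)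
      rw [uc_coe_bot]
      have := z.2.2
      simp only [zero_add]
      exact max_eq_left (by linarith)
    have hbot' : ∀ z : unitInterval, od z ⊥ = ⊥ := fun z => by
      apply Subtype.ext
      show max 0 (z.1 + ((⊥:unitInterval):ℝ) - 1) = ((⊥:unitInterval):ℝ)
      rw [uc_coe_bot]
      have := z.2.2
      exact max_eq_left (by linarith)
    rw [hbot y, hbot' x, max_self]
  · apply Subtype.ext
    have hbx : BddAbove (Set.range fun i => ((d i x : unitInterval) : ℝ)) :=
      ⟨1, by rintro _ ⟨i, rfl⟩; exact (d i x).2.2⟩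
    have hby : BddAbove (Set.range fun i => ((d i y : unitInterval) : ℝ)) :=
      ⟨1, by rintro _ ⟨i, rfl⟩; exact (d i y).2.2⟩
    have hbf : BddAbove (Set.range fun i => max 0 (((d i x : unitInterval) : ℝ) + y.1 - 1)) :=
      ⟨1, by rintro _ ⟨i, rfl⟩; exact max_le zero_le_one (by have := (d i x).2.2; have := y.2.2; linarith)⟩
    have hbg : BddAbove (Set.range fun i => max 0 (x.1 + ((d i y : unitInterval) : ℝ) - 1)) :=
      ⟨1, by rintro _ ⟨i, rfl⟩; exact max_le zero_le_one (by have := (d i y).2.2; have := x.2.2; linarith)⟩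
    show ((⨆ i, d i (od x y) : unitInterval) : ℝ) = _
    rw [uc_coe_iSup]
    have step : ∀ i, ((d i (od x y) : unitInterval) : ℝ)
        = max (max 0 (((d i x : unitInterval) : ℝ) + y.1 - 1))
              (max 0 (x.1 + ((d i y : unitInterval) : ℝ) - 1)) := fun i => by
      rw [hd i x y, uc_coe_max]; rfl
    calc ⨆ i, ((d i (od x y) : unitInterval) : ℝ)
        = ⨆ i, max (max 0 (((d i x : unitInterval) : ℝ) + y.1 - 1))
              (max 0 (x.1 + ((d i y : unitInterval) : ℝ) - 1)) := iSup_congr step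
      _ = max (⨆ i, max 0 (((d i x : unitInterval) : ℝ) + y.1 - 1))
              (⨆ i, max 0 (x.1 + ((d i y : unitInterval) : ℝ) - 1)) :=
          real_sup_max _ _ hbf hbg
      _ = _ := by
          rw [uc_coe_max]
          show _ = max (max 0 (((⨆ i, d i x : unitInterval) : ℝ) + y.1 - 1))
            (max 0 (x.1 + ((⨆ i, d i y : unitInterval) : ℝ) - 1))
          rw [uc_coe_iSup, uc_coe_iSup, ← real_L1 _ hbx y.1, ← real_L2 _ hby x.1]
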